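/- arXiv:2411.01416 — 4 statements merged into one kernel-verified Lean document; each statement's English description precedes it below -/
import Mathlib

section
/- Let H be a nonempty finite set, w₀ > 0 a real number, w : H → ℝ with wₕ > 0 for all h ∈ H, d : H → ℝ with dₕ ≥ 0 for all h ∈ H, and d̄ := max_{h∈H} dₕ. Then for every x : H → ℝ with xₕ ∈ {0,1} for all h ∈ H and every q ∈ ℝ, the inequality q ≤ (∑_{h∈H} dₕ wₕ xₕ) / (w₀ + ∑_{h∈H} wₕ xₕ) holds if and only if the second-order conic inequality √( 4 d̄ w₀ + ∑_{h∈H} 4 (d̄ − dₕ) wₕ xₕ² + (w₀ + ∑_{h∈H} wₕ xₕ − d̄ + q)² ) ≤ w₀ + ∑_{h∈H} wₕ xₕ + d̄ − q holds. -/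
/-- Theorem 1 (SOC representation): for binary `x`, the fractional constraint
`q ≤ (∑ h, d h * w h * x h) / (w₀ + ∑ h, w h * x h)` is equivalent to an explicit
second-order conic inequality. -/
theorem soc_representation {H : Type*} [Fintype H] [Nonempty H]
    (w₀ : ℝ) (hw₀ : 0 < w₀) (w d : H → ℝ)
    (hw : ∀ h, 0 < w h) (hd : ∀ h, 0 ≤ d h)
    (dbar : ℝ) (hdbar : dbar = Finset.univ.sup' Finset.univ_nonempty d)
    (x : H → ℝ) (hx : ∀ h, x h = 0 ∨ x h = 1) (q : ℝ) :
    q ≤ (∑ h, d h * w h * x h) / (w₀ + ∑ h, w h * x h) ↔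
      Real.sqrt (4 * dbar * w₀ + (∑ h, 4 * (dbar - d h) * w h * (x h) ^ 2) +
          (w₀ + (∑ h, w h * x h) - dbar + q) ^ 2) ≤
        w₀ + (∑ h, w h * x h) + dbar - q := by
  set S := ∑ h, w h * x h with hSdef
  set D := ∑ h, d h * w h * x h with hDdef
  have hx01 : ∀ h, 0 ≤ x h ∧ x h ≤ 1 := by
    intro h; rcases hx h with h1 | h1 <;> simp [h1]
  have hS : 0 ≤ S := Finset.sum_nonneg fun h _ =>
    mul_nonneg (hw h).le (hx01 h).1
  have hT : 0 < w₀ + S := by linarith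
  have hdle : ∀ h, d h ≤ dbar := fun h => hdbar ▸ Finset.le_sup' d (Finset.mem_univ h)
  have hdbar0 : 0 ≤ dbar := (hd (Classical.arbitrary H)).trans (hdle _)
  have hDle : D ≤ dbar * (w₀ + S) := by
    have h1 : D ≤ dbar * S := by
      rw [hDdef, hSdef, Finset.mul_sum]
      refine Finset.sum_le_sum fun h _ => ?_
      have := mul_le_mul_of_nonneg_right (hdle h)
        (mul_nonneg (hw h).le (hx01 h).1)
      calc d h * w h * x h = d h * (w h * x h) := by ring
        _ ≤ dbar * (w h * x h) := this
    nlinarith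
  have hA : (∑ h, 4 * (dbar - d h) * w h * (x h) ^ 2) = 4 * dbar * S - 4 * D := by
    rw [hSdef, hDdef, Finset.mul_sum, Finset.mul_sum, ← Finset.sum_sub_distrib]
    refine Finset.sum_congr rfl fun h _ => ?_
    have hx2 : (x h) ^ 2 = x h := by rcases hx h with h1 | h1 <;> simp [h1]
    rw [hx2]; ring
  rw [hA]
  constructor
  · intro hq
    rw [le_div_iff₀ hT] at hq
    have hqd : q ≤ dbar := by nlinarith
    rw [Real.sqrt_le_left (by linarith)]
    nlinarith
  · intro hq
    have harg : 0 ≤ 4 * dbar * w₀ + (4 * dbar * S - 4 * D) +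
        (w₀ + S - dbar + q) ^ 2 := by nlinarith [sq_nonneg (w₀ + S - dbar + q)]
    have hy : 0 ≤ w₀ + S + dbar - q := (Real.sqrt_nonneg _).trans hq
    have h2 : 4 * dbar * w₀ + (4 * dbar * S - 4 * D) + (w₀ + S - dbar + q) ^ 2 ≤
        (w₀ + S + dbar - q) ^ 2 := (Real.sqrt_le_left hy).mp hq
    rw [le_div_iff₀ hT]
    nlinarith
end

section
/- Let H be a nonempty finite set, w₀ > 0 a real number, w : H → ℝ with wₕ > 0 for all h ∈ H, d : H → ℝ with dₕ ≥ 0 for all h ∈ H, and d̄ := max_{h∈H} dₕ. Define Q : (H → ℝ) → ℝ by Q(x) = (∑_{h∈H} wₕ (d̄ xₕ − (d̄ − dₕ) xₕ²)) / (w₀ + ∑_{h∈H} wₕ xₕ). Then Q is concave on the unit cube [0,1]^H, i.e., for all x, y ∈ [0,1]^H and all λ ∈ [0,1], Q(λx + (1−λ)y) ≥ λ Q(x) + (1−λ) Q(y). -/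
/-- Theorem 2, first claim: the function `Q` is concave on the unit cube `[0,1]^H`. -/
theorem Q_concave {H : Type*} [Fintype H] [Nonempty H]
    (w₀ : ℝ) (hw₀ : 0 < w₀) (w d : H → ℝ)
    (hw : ∀ h, 0 < w h) (hd : ∀ h, 0 ≤ d h)
    (dbar : ℝ) (hdbar : dbar = Finset.univ.sup' Finset.univ_nonempty d)
    (Q : (H → ℝ) → ℝ)
    (hQ : ∀ x : H → ℝ, Q x =
      (∑ h, w h * (dbar * x h - (dbar - d h) * (x h) ^ 2)) / (w₀ + ∑ h, w h * x h))
    (x y : H → ℝ) (hx : ∀ h, x h ∈ Set.Icc (0 : ℝ) 1) (hy : ∀ h, y h ∈ Set.Icc (0 : ℝ) 1)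
    (l : ℝ) (hl : l ∈ Set.Icc (0 : ℝ) 1) :
    l * Q x + (1 - l) * Q y ≤ Q (fun h => l * x h + (1 - l) * y h) := by
  obtain ⟨hl0, hl1⟩ := hl
  have hl1' : 0 ≤ 1 - l := by linarith
  have hdbd : ∀ h, d h ≤ dbar := fun h => hdbar ▸ Finset.le_sup' d (Finset.mem_univ h)
  have hdbar0 : 0 ≤ dbar := le_trans (hd (Classical.arbitrary H)) (hdbd _)
  set Sx : ℝ := ∑ h, w h * x h with hSx
  set Sy : ℝ := ∑ h, w h * y h with hSy
  set Px : ℝ := ∑ h, w h * (dbar - d h) * x h ^ 2 with hPx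
  set Py : ℝ := ∑ h, w h * (dbar - d h) * y h ^ 2 with hPy
  set Pxy : ℝ := ∑ h, w h * (dbar - d h) * (x h * y h) with hPxy
  have hSx0 : 0 ≤ Sx :=
    Finset.sum_nonneg fun h _ => mul_nonneg (hw h).le (hx h).1
  have hSy0 : 0 ≤ Sy :=
    Finset.sum_nonneg fun h _ => mul_nonneg (hw h).le (hy h).1
  have hA : (0:ℝ) < w₀ + Sx := by linarith
  have hB : (0:ℝ) < w₀ + Sy := by linarith
  have hC : (0:ℝ) < l * (w₀ + Sx) + (1 - l) * (w₀ + Sy) := by nlinarith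
  -- numerators
  have hNx : ∑ h, w h * (dbar * x h - (dbar - d h) * (x h) ^ 2) = dbar * Sx - Px := by
    rw [hSx, hPx, Finset.mul_sum, ← Finset.sum_sub_distrib]
    exact Finset.sum_congr rfl fun h _ => by ring
  have hNy : ∑ h, w h * (dbar * y h - (dbar - d h) * (y h) ^ 2) = dbar * Sy - Py := by
    rw [hSy, hPy, Finset.mul_sum, ← Finset.sum_sub_distrib]
    exact Finset.sum_congr rfl fun h _ => by ring
  have hNz : ∑ h, w h * (dbar * (l * x h + (1 - l) * y h)
        - (dbar - d h) * (l * x h + (1 - l) * y h) ^ 2)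
      = dbar * (l * Sx + (1 - l) * Sy)
        - (l ^ 2 * Px + 2 * l * (1 - l) * Pxy + (1 - l) ^ 2 * Py) := by
    simp only [hSx, hSy, hPx, hPy, hPxy, Finset.mul_sum, ← Finset.sum_add_distrib,
      ← Finset.sum_sub_distrib]
    exact Finset.sum_congr rfl fun h _ => by ring
  have hDz : w₀ + ∑ h, w h * (l * x h + (1 - l) * y h)
      = l * (w₀ + Sx) + (1 - l) * (w₀ + Sy) := by
    have hS : ∑ h, w h * (l * x h + (1 - l) * y h) = l * Sx + (1 - l) * Sy := by
      simp only [hSx, hSy, Finset.mul_sum, ← Finset.sum_add_distrib]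
      exact Finset.sum_congr rfl fun h _ => by ring
    rw [hS]; ring
  -- key nonnegativity
  have hK : 0 ≤ (w₀ + Sy) ^ 2 * Px - 2 * (w₀ + Sx) * (w₀ + Sy) * Pxy
      + (w₀ + Sx) ^ 2 * Py := by
    have heq : (w₀ + Sy) ^ 2 * Px - 2 * (w₀ + Sx) * (w₀ + Sy) * Pxy + (w₀ + Sx) ^ 2 * Py
        = ∑ h, w h * (dbar - d h) * ((w₀ + Sy) * x h - (w₀ + Sx) * y h) ^ 2 := by
      simp only [hPx, hPy, hPxy, Finset.mul_sum, ← Finset.sum_add_distrib,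
        ← Finset.sum_sub_distrib]
      exact Finset.sum_congr rfl fun h _ => by ring
    rw [heq]
    exact Finset.sum_nonneg fun h _ =>
      mul_nonneg (mul_nonneg (hw h).le (by linarith [hdbd h])) (sq_nonneg _)
  -- rewrite the goal
  rw [hQ, hQ, hQ]
  simp only [hNx, hNy, hNz, hDz, ← hSx, ← hSy]
  rw [← mul_div_assoc, ← mul_div_assoc,
    div_add_div _ _ (ne_of_gt hA) (ne_of_gt hB),
    div_le_div_iff₀ (mul_pos hA hB) hC]
  have h1 : 0 ≤ dbar * w₀ * (l * (1 - l)) * (Sx - Sy) ^ 2 :=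
    mul_nonneg (mul_nonneg (mul_nonneg hdbar0 hw₀.le)
      (mul_nonneg hl0 hl1')) (sq_nonneg _)
  have h2 : 0 ≤ l * (1 - l) * ((w₀ + Sy) ^ 2 * Px
      - 2 * (w₀ + Sx) * (w₀ + Sy) * Pxy + (w₀ + Sx) ^ 2 * Py) :=
    mul_nonneg (mul_nonneg hl0 hl1') hK
  nlinarith [h1, h2]
end

section
/- Let H be a nonempty finite set, w₀ > 0 a real number, w : H → ℝ with wₕ > 0 for all h ∈ H, d : H → ℝ with dₕ ≥ 0 for all h ∈ H, and d̄ := max_{h∈H} dₕ. Define Q : (H → ℝ) → ℝ by Q(x) = (∑_{h∈H} wₕ (d̄ xₕ − (d̄ − dₕ) xₕ²)) / (w₀ + ∑_{h∈H} wₕ xₕ). Then for all x, x̂ ∈ [0,1]^H, the tangent-plane (subgradient) inequality Q(x) ≤ Q(x̂) + ∑_{h∈H} (∂Q/∂xₕ)(x̂) · (xₕ − x̂ₕ) holds, where (∂Q/∂xₕ)(x̂) = wₕ · (d̄ − 2 (d̄ − dₕ) x̂ₕ − Q(x̂)) / (w₀ + ∑_{h∈H} wₕ x̂ₕ). -/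
/-- Gradient (tangent-plane) inequality for the concave function `Q` on `[0,1]^H`. -/
theorem Q_subgradient_inequality {H : Type*} [Fintype H] [Nonempty H]
    (w₀ : ℝ) (hw₀ : 0 < w₀) (w d : H → ℝ)
    (hw : ∀ h, 0 < w h) (hd : ∀ h, 0 ≤ d h)
    (dbar : ℝ) (hdbar : dbar = Finset.univ.sup' Finset.univ_nonempty d)
    (Q : (H → ℝ) → ℝ)
    (hQ : ∀ x : H → ℝ, Q x =
      (∑ h, w h * (dbar * x h - (dbar - d h) * (x h) ^ 2)) / (w₀ + ∑ h, w h * x h))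
    (x xhat : H → ℝ) (hx : ∀ h, x h ∈ Set.Icc (0 : ℝ) 1)
    (hxhat : ∀ h, xhat h ∈ Set.Icc (0 : ℝ) 1) :
    Q x ≤ Q xhat + ∑ h,
      (w h * (dbar - 2 * (dbar - d h) * xhat h - Q xhat) / (w₀ + ∑ g, w g * xhat g)) *
        (x h - xhat h) := by
  have ha : ∀ h : H, 0 ≤ dbar - d h := by
    intro h
    have : d h ≤ dbar := hdbar ▸ Finset.le_sup' d (Finset.mem_univ h)
    linarith
  have hdbar0 : 0 ≤ dbar := by
    obtain ⟨h⟩ := ‹Nonempty H›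
    have := ha h; have := hd h; linarith
  set Su : ℝ := w₀ + ∑ h, w h * x h with hSu_def
  set Sv : ℝ := w₀ + ∑ h, w h * xhat h with hSv_def
  set Nu : ℝ := ∑ h, w h * (dbar * x h - (dbar - d h) * (x h) ^ 2) with hNu_def
  set Nv : ℝ := ∑ h, w h * (dbar * xhat h - (dbar - d h) * (xhat h) ^ 2) with hNv_def
  set T : ℝ := ∑ h, w h * (dbar - 2 * (dbar - d h) * xhat h) * (x h - xhat h) with hT_def
  set C : ℝ := ∑ h, w h * (dbar - d h) * (x h - xhat h) ^ 2 with hC_def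
  set M : ℝ := ∑ h, w h * (dbar - d h) * xhat h * (x h - xhat h) with hM_def
  set P : ℝ := ∑ h, w h * (dbar - d h) * (xhat h) ^ 2 with hP_def
  set R : ℝ := ∑ h, w h * (x h - xhat h) with hR_def
  have hSu : 0 < Su := by
    have : 0 ≤ ∑ h, w h * x h :=
      Finset.sum_nonneg fun h _ => mul_nonneg (hw h).le (hx h).1
    rw [hSu_def]; linarith
  have hSv : 0 < Sv := by
    have : 0 ≤ ∑ h, w h * xhat h :=
      Finset.sum_nonneg fun h _ => mul_nonneg (hw h).le (hxhat h).1
    rw [hSv_def]; linarith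
  have hSuR : Su = Sv + R := by
    rw [hSu_def, hSv_def, hR_def, add_assoc, ← Finset.sum_add_distrib]
    congr 1
    exact Finset.sum_congr rfl fun h _ => by ring
  have hNuC : Nu + C = Nv + T := by
    rw [hNu_def, hC_def, hNv_def, hT_def, ← Finset.sum_add_distrib, ← Finset.sum_add_distrib]
    exact Finset.sum_congr rfl fun h _ => by ring
  have hTR : T + 2 * M = dbar * R := by
    rw [hT_def, hM_def, hR_def, Finset.mul_sum, Finset.mul_sum, ← Finset.sum_add_distrib]
    exact Finset.sum_congr rfl fun h _ => by ring
  have hNvP : Nv + P = dbar * (Sv - w₀) := by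
    have hsw : Sv - w₀ = ∑ h, w h * xhat h := by rw [hSv_def]; ring
    rw [hsw, hNv_def, hP_def, Finset.mul_sum, ← Finset.sum_add_distrib]
    exact Finset.sum_congr rfl fun h _ => by ring
  have hkey_nonneg : 0 ≤ C * Sv ^ 2 - M * (2 * (Sv * R)) + P * R ^ 2 := by
    have h1 : ∑ h, w h * (dbar - d h) * ((x h - xhat h) * Sv - xhat h * R) ^ 2
        = ∑ h, (w h * (dbar - d h) * (x h - xhat h) ^ 2 * Sv ^ 2
            - w h * (dbar - d h) * xhat h * (x h - xhat h) * (2 * (Sv * R))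
            + w h * (dbar - d h) * (xhat h) ^ 2 * R ^ 2) :=
      Finset.sum_congr rfl fun h _ => by ring
    rw [Finset.sum_add_distrib, Finset.sum_sub_distrib, ← Finset.sum_mul, ← Finset.sum_mul,
      ← Finset.sum_mul, ← hC_def, ← hM_def, ← hP_def] at h1
    rw [← h1]
    exact Finset.sum_nonneg fun h _ =>
      mul_nonneg (mul_nonneg (hw h).le (ha h)) (sq_nonneg _)
  have hΔ : 0 ≤ C * Sv ^ 2 + T * (Sv * R) - Nv * R ^ 2 := by
    have hid : C * Sv ^ 2 + T * (Sv * R) - Nv * R ^ 2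
        = (C * Sv ^ 2 - M * (2 * (Sv * R)) + P * R ^ 2) + dbar * w₀ * R ^ 2 := by
      linear_combination (Sv * R) * hTR - R ^ 2 * hNvP
    have h1 : 0 ≤ dbar * w₀ * R ^ 2 :=
      mul_nonneg (mul_nonneg hdbar0 hw₀.le) (sq_nonneg R)
    linarith
  have hQv : Q xhat = Nv / Sv := hQ xhat
  have hQu : Q x = Nu / Su := hQ x
  have hsum : (∑ h, (w h * (dbar - 2 * (dbar - d h) * xhat h - Q xhat) / Sv) *
        (x h - xhat h)) = (T - Q xhat * R) / Sv := by
    have h1 : (∑ h, (w h * (dbar - 2 * (dbar - d h) * xhat h - Q xhat) / Sv) *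
          (x h - xhat h))
        = ∑ h, ((w h * (dbar - 2 * (dbar - d h) * xhat h) * (x h - xhat h)
            - Q xhat * (w h * (x h - xhat h))) / Sv) :=
      Finset.sum_congr rfl fun h _ => by ring
    rw [h1, ← Finset.sum_div, Finset.sum_sub_distrib, ← Finset.mul_sum, ← hT_def, ← hR_def]
  rw [hsum, hQu, hQv]
  clear_value Su Sv Nu Nv T C M P R
  have hSvR : 0 < Sv + R := hSuR ▸ hSu
  have heq : Nv / Sv + (T - Nv / Sv * R) / Sv - Nu / Su =
      (C * Sv ^ 2 + T * (Sv * R) - Nv * R ^ 2) / (Su * Sv ^ 2) := by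
    have hNu' : Nu = Nv + T - C := by linarith
    rw [hNu', hSuR]
    field_simp
    ring
  have hfrac : 0 ≤ (C * Sv ^ 2 + T * (Sv * R) - Nv * R ^ 2) / (Su * Sv ^ 2) :=
    div_nonneg hΔ (by positivity)
  linarith
end

section
/- Let H be a nonempty finite set, w₀ > 0 a real number, w : H → ℝ with wₕ > 0 for all h ∈ H, d : H → ℝ with dₕ ≥ 0 for all h ∈ H, and d̄ := max_{h∈H} dₕ. Define Q : (H → ℝ) → ℝ by Q(x) = (∑_{h∈H} wₕ (d̄ xₕ − (d̄ − dₕ) xₕ²)) / (w₀ + ∑_{h∈H} wₕ xₕ), and for x̂ ∈ (H → ℝ) write (∂Q/∂xₕ)(x̂) = wₕ · (d̄ − 2 (d̄ − dₕ) x̂ₕ − Q(x̂)) / (w₀ + ∑_{h∈H} wₕ x̂ₕ). Then for every x : H → ℝ with xₕ ∈ {0,1} for all h ∈ H and every q ∈ ℝ, the inequality q ≤ (∑_{h∈H} dₕ wₕ xₕ) / (w₀ + ∑_{h∈H} wₕ xₕ) holds if and only if for every x̂ : H → ℝ with x̂ₕ ∈ {0,1} for all h ∈ H, one has q ≤ Q(x̂)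 + ∑_{h∈H} (∂Q/∂xₕ)(x̂) · (xₕ − x̂ₕ). -/
/-- Theorem 2, second claim: over binary points, the fractional constraint is equivalent
to the intersection of all subgradient inequalities of `Q` at binary points. -/
theorem fractional_iff_subgradient {H : Type*} [Fintype H] [Nonempty H]
    (w₀ : ℝ) (hw₀ : 0 < w₀) (w d : H → ℝ)
    (hw : ∀ h, 0 < w h) (hd : ∀ h, 0 ≤ d h)
    (dbar : ℝ) (hdbar : dbar = Finset.univ.sup' Finset.univ_nonempty d)
    (Q : (H → ℝ) → ℝ)
    (hQ : ∀ x : H → ℝ, Q x =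
      (∑ h, w h * (dbar * x h - (dbar - d h) * (x h) ^ 2)) / (w₀ + ∑ h, w h * x h))
    (x : H → ℝ) (hx : ∀ h, x h = 0 ∨ x h = 1) (q : ℝ) :
    q ≤ (∑ h, d h * w h * x h) / (w₀ + ∑ h, w h * x h) ↔
      ∀ xhat : H → ℝ, (∀ h, xhat h = 0 ∨ xhat h = 1) →
        q ≤ Q xhat + ∑ h,
          (w h * (dbar - 2 * (dbar - d h) * xhat h - Q xhat) / (w₀ + ∑ g, w g * xhat g)) *
            (x h - xhat h) := by
  classical
  have hdle : ∀ h, d h ≤ dbar := fun h => hdbar ▸ Finset.le_sup' d (Finset.mem_univ h)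
  have hdbar0 : 0 ≤ dbar := le_trans (hd (Classical.arbitrary H)) (hdle _)
  have hc : ∀ h, 0 ≤ w h * (dbar - d h) :=
    fun h => mul_nonneg (hw h).le (by linarith [hdle h])
  have hSpos : ∀ y : H → ℝ, (∀ h, y h = 0 ∨ y h = 1) → 0 < w₀ + ∑ h, w h * y h := by
    intro y hy
    have h0 : 0 ≤ ∑ h, w h * y h := by
      refine Finset.sum_nonneg fun h _ => ?_
      rcases hy h with h1 | h1 <;> simp [h1] <;> exact (hw h).le
    linarith
  have hQbin : ∀ y : H → ℝ, (∀ h, y h = 0 ∨ y h = 1) →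
      Q y = (∑ h, d h * w h * y h) / (w₀ + ∑ h, w h * y h) := by
    intro y hy
    rw [hQ]
    congr 1
    refine Finset.sum_congr rfl fun h _ => ?_
    rcases hy h with h1 | h1 <;> simp [h1] <;> ring
  constructor
  · intro hq xhat hxhat
    have hS : 0 < w₀ + ∑ h, w h * x h := hSpos x hx
    have hS' : 0 < w₀ + ∑ h, w h * xhat h := hSpos xhat hxhat
    rw [hQbin xhat hxhat]
    set S : ℝ := w₀ + ∑ h, w h * x h with hSdef
    set S' : ℝ := w₀ + ∑ h, w h * xhat h with hS'def
    set N : ℝ := ∑ h, d h * w h * x h with hNdef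
    set N' : ℝ := ∑ h, d h * w h * xhat h with hN'def
    set L : ℝ := ∑ h, w h * (dbar - 2 * (dbar - d h) * xhat h) * (x h - xhat h) with hLdef
    set K : ℝ := ∑ h, (w h * (dbar - d h)) * xhat h * (x h - xhat h) with hKdef
    set M : ℝ := ∑ h, (w h * (dbar - d h)) * xhat h * (1 - x h) with hMdef
    set V : ℝ := ∑ h, (w h * (dbar - d h)) * (x h - xhat h) ^ 2 with hVdef
    set Cx : ℝ := ∑ h, (w h * (dbar - d h)) * x h with hCxdef
    set C' : ℝ := ∑ h, (w h * (dbar - d h)) * xhat h with hC'def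
    -- sum relations
    have hT : (∑ h, w h * (x h - xhat h)) = S - S' := by
      rw [hSdef, hS'def]
      simp only [mul_sub]
      rw [Finset.sum_sub_distrib]
      ring
    have hNr : N = dbar * (S - w₀) - Cx := by
      rw [hNdef, hSdef, hCxdef]
      have h1 : ∀ h ∈ Finset.univ, d h * w h * x h
          = dbar * (w h * x h) - (w h * (dbar - d h)) * x h := fun h _ => by ring
      rw [Finset.sum_congr rfl h1, Finset.sum_sub_distrib, ← Finset.mul_sum]
      ring
    have hN'r : N' = dbar * (S' - w₀) - C' := by
      rw [hN'def, hS'def, hC'def]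
      have h1 : ∀ h ∈ Finset.univ, d h * w h * xhat h
          = dbar * (w h * xhat h) - (w h * (dbar - d h)) * xhat h := fun h _ => by ring
      rw [Finset.sum_congr rfl h1, Finset.sum_sub_distrib, ← Finset.mul_sum]
      ring
    have hLr : L = dbar * (S - S') - 2 * K := by
      rw [hLdef, hKdef, ← hT]
      have h1 : ∀ h ∈ Finset.univ, w h * (dbar - 2 * (dbar - d h) * xhat h) * (x h - xhat h)
          = dbar * (w h * (x h - xhat h))
            - 2 * ((w h * (dbar - d h)) * xhat h * (x h - xhat h)) := fun h _ => by ring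
      rw [Finset.sum_congr rfl h1, Finset.sum_sub_distrib, ← Finset.mul_sum, ← Finset.mul_sum]
    have hKr : K = -M := by
      rw [hKdef, hMdef, ← Finset.sum_neg_distrib]
      refine Finset.sum_congr rfl fun h _ => ?_
      rcases hxhat h with h1 | h1 <;> simp [h1] <;> ring
    have hVr : V = Cx - C' - 2 * K := by
      rw [hVdef, hCxdef, hC'def, hKdef, Finset.mul_sum, ← Finset.sum_sub_distrib,
        ← Finset.sum_sub_distrib]
      refine Finset.sum_congr rfl fun h _ => ?_
      rcases hx h with h1 | h1 <;> rcases hxhat h with h2 | h2 <;> simp [h1, h2] <;> ring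
    -- sign facts
    have hM0 : 0 ≤ M := by
      rw [hMdef]
      refine Finset.sum_nonneg fun h _ => ?_
      rcases hx h with h1 | h1 <;> rcases hxhat h with h2 | h2 <;> simp [h1, h2] <;>
        exact hc h
    have hMV : M ≤ V := by
      rw [hMdef, hVdef]
      refine Finset.sum_le_sum fun h _ => ?_
      rcases hx h with h1 | h1 <;> rcases hxhat h with h2 | h2 <;> simp [h1, h2] <;>
        exact hc h
    have hMC : M ≤ C' := by
      rw [hMdef, hC'def]
      refine Finset.sum_le_sum fun h _ => ?_
      rcases hx h with h1 | h1 <;> rcases hxhat h with h2 | h2 <;> simp [h1, h2] <;>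
        exact hc h
    -- key polynomial inequality
    have hE : 0 ≤ S' ^ 2 * V + 2 * S' * (S - S') * M + (C' + dbar * w₀) * (S - S') ^ 2 := by
      nlinarith [mul_nonneg (sub_nonneg.2 hMV) (sq_nonneg S'),
        mul_nonneg (sub_nonneg.2 hMC) (sq_nonneg (S - S')),
        mul_nonneg hM0 (sq_nonneg (S' + (S - S'))),
        mul_nonneg (mul_nonneg hdbar0 hw₀.le) (sq_nonneg (S - S'))]
    have hP : N' * S * (2 * S' - S) + S * S' * L - N * S' ^ 2
        = S' ^ 2 * V + 2 * S' * (S - S') * M + (C' + dbar * w₀) * (S - S') ^ 2 := by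
      rw [hNr, hN'r, hLr, hVr, hKr]
      ring
    have key : N * S' ^ 2 ≤ N' * S * (2 * S' - S) + S * S' * L := by linarith
    -- rewrite the subgradient sum in closed form
    have hsum : (∑ h, (w h * (dbar - 2 * (dbar - d h) * xhat h - N' / S') / S')
          * (x h - xhat h))
        = (L - (N' / S') * (S - S')) / S' := by
      have h1 : ∀ h ∈ Finset.univ,
          (w h * (dbar - 2 * (dbar - d h) * xhat h - N' / S') / S') * (x h - xhat h)
          = (w h * (dbar - 2 * (dbar - d h) * xhat h) * (x h - xhat h)
              - (N' / S') * (w h * (x h - xhat h))) / S' := by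
        intro h _
        field_simp
      rw [Finset.sum_congr rfl h1, ← Finset.sum_div, Finset.sum_sub_distrib,
        ← Finset.mul_sum, ← hLdef, hT]
    rw [hsum]
    have expand : N' / S' + (L - (N' / S') * (S - S')) / S'
        = (N' * S' + L * S' - N' * (S - S')) / S' ^ 2 := by
      field_simp
      ring
    rw [expand]
    have last : N / S ≤ (N' * S' + L * S' - N' * (S - S')) / S' ^ 2 := by
      rw [div_le_div_iff₀ hS (pow_pos hS' 2)]
      have h2 : (N' * S' + L * S' - N' * (S - S')) * S
          = N' * S * (2 * S' - S) + S * S' * L := by ring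
      linarith
    exact hq.trans last
  · intro hsub
    have h1 := hsub x hx
    simp only [sub_self, mul_zero, Finset.sum_const_zero, add_zero] at h1
    rwa [hQbin x hx] at h1
end
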